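/- Let G be a 3-uniform hypergraph with at least two edges. There is a constant C = C(G) such that for all N ≥ 3 and all q ≥ C · (N³/ex(N, G)) · log N, there is a coloring of the edges of the complete 3-graph on N vertices with q colors containing no monochromatic copy of G; in particular r(G;q) > N for such q. -/

import Mathlib

/-- A 3-uniform hypergraph with vertices drawn from ℕ. -/
structure ThreeGraph where
  verts : Finset ℕ
  edges : Finset (Finset ℕ)
  edge_card : ∀ e ∈ edges, e.card = 3
  edge_sub : ∀ e ∈ edges, e ⊆ verts

/-- A 3-graph is tripartite if its vertex set can be partitioned into three parts so that
every edge has exactly one vertex in each part. -/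
def Tripartite (G : ThreeGraph) : Prop :=
  ∃ V1 V2 V3 : Finset ℕ,
    Disjoint V1 V2 ∧ Disjoint V1 V3 ∧ Disjoint V2 V3 ∧
    V1 ∪ V2 ∪ V3 = G.verts ∧
    ∀ e ∈ G.edges, (e ∩ V1).card = 1 ∧ (e ∩ V2).card = 1 ∧ (e ∩ V3).card = 1

/-- Membership in the family 𝒰₁: there is a vertex subset intersecting every edge in
exactly one vertex. -/
def InU1 (G : ThreeGraph) : Prop :=
  ∃ W : Finset ℕ, W ⊆ G.verts ∧ ∀ e ∈ G.edges, (e ∩ W).card = 1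

/-- `Reducible G H F` : `G` is reducible to the pair `(H, F)` by collapsing a collapsible
set `U` (with `F = G[U]`), where the new vertex of `H` is `v`. -/
def Reducible (G H F : ThreeGraph) : Prop :=
  ∃ (U : Finset ℕ) (v : ℕ),
    U ⊆ G.verts ∧ 2 ≤ U.card ∧ U.card < G.verts.card ∧
    (∀ e ∈ G.edges, (e ∩ U).card ≠ 2) ∧
    v ∉ G.verts ∧
    H.verts = (G.verts \ U) ∪ {v} ∧
    H.edges = G.edges.filter (fun e => e ∩ U = ∅) ∪
      (G.edges.filter (fun e => (e ∩ U).card = 1)).image (fun e => (e \ U) ∪ {v}) ∧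
    F.verts = U ∧
    F.edges = G.edges.filter (fun e => e ⊆ U)

/-- `MemU i G` means `G ∈ 𝒰ᵢ`: `𝒰₀` is the family of tripartite 3-graphs, `𝒰₁` of 3-graphs
with a vertex set meeting every edge exactly once, the families are nested, and for `i ≥ 2`,
`G ∈ 𝒰ᵢ` whenever `G` is reducible to `(H, F)` with `H ∈ 𝒰ᵢ₋₁` and `F ∈ 𝒰ᵢ`. -/
inductive MemU : ℕ → ThreeGraph → Prop where
  | zero (G : ThreeGraph) : Tripartite G → MemU 0 G
  | one (G : ThreeGraph) : InU1 G → MemU 1 G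
  | mono (i : ℕ) (G : ThreeGraph) : MemU i G → MemU (i + 1) G
  | reduce (i : ℕ) (G H F : ThreeGraph) :
      Reducible G H F → MemU (i + 1) H → MemU (i + 2) F → MemU (i + 2) G

/-- `G ∈ 𝒰 = ⋃ᵢ 𝒰ᵢ`. -/
def InU (G : ThreeGraph) : Prop := ∃ i, MemU i G

/-- A monochromatic copy of `G` in color `i` under the coloring `χ` of the triples of
`Fin N`. -/
def MonoCopy {N q : ℕ} (χ : Finset (Fin N) → Fin q) (i : Fin q) (G : ThreeGraph) : Prop :=
  ∃ f : ℕ → Fin N, Set.InjOn f ↑G.verts ∧ ∀ e ∈ G.edges, χ (e.image f) = i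

/-- `N` vertices suffice to find, in any `q`-coloring, a monochromatic copy of `Gs i` in
color `i` for some `i`. -/
def RamseyProp {q : ℕ} (Gs : Fin q → ThreeGraph) (N : ℕ) : Prop :=
  ∀ χ : Finset (Fin N) → Fin q, ∃ i : Fin q, MonoCopy χ i (Gs i)

/-- The Ramsey number `r(G₁, …, G_q)`. -/
noncomputable def ramseyNumber {q : ℕ} (Gs : Fin q → ThreeGraph) : ℕ :=
  sInf {N | RamseyProp Gs N}

/-- The `q`-color Ramsey number `r(G; q)`. -/
noncomputable def rq (G : ThreeGraph) (q : ℕ) : ℕ :=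
  ramseyNumber (fun _ : Fin q => G)

/-- `H` contains a copy of `G`. -/
def ContainsCopy (H G : ThreeGraph) : Prop :=
  ∃ f : ℕ → ℕ, Set.InjOn f ↑G.verts ∧ (∀ v ∈ G.verts, f v ∈ H.verts) ∧
    ∀ e ∈ G.edges, e.image f ∈ H.edges

/-- The Turán (extremal) number `ex(N, G)`: the maximum number of edges of a `G`-free
3-graph on `N` vertices. -/
noncomputable def exNum (N : ℕ) (G : ThreeGraph) : ℕ :=
  sSup {m | ∃ H : ThreeGraph, H.verts = Finset.range N ∧ ¬ ContainsCopy H G ∧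
    H.edges.card = m}

/-!
Let `H` be an extremal `G`-free 3-graph on `N` vertices, with `x = ex(N, G)` edges among the
`T = C(N, 3)` triples. For a uniformly random permutation `σ` of the vertices, a fixed triple lies
in `σ(H)` with probability `x / T`, so `q` independent permutations all miss it with probability
`(1 - x / T)^q ≤ exp (-q x / T) < 1 / T` once `q ≥ 4 N³ log N / x`. Hence some `q` copies
`σ₁(H), …, σ_q(H)` cover every triple; colouring a triple by a copy containing it makes every
colour class `G`-free. For `N < r(G; q)` one also needs `r(G; q)` to exist, i.e. Ramsey's theorem
for 3-graphs, which follows from the infinite Ramsey theorem by compactness.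
-/

open Finset
open scoped Pointwise

theorem exists_infinite_monochromatic_subset {ι : Type*} [Finite ι] (k : ℕ) :
    ∀ (χ : Finset ℕ → ι) (S : Set ℕ), S.Infinite →
      ∃ T ⊆ S, T.Infinite ∧
        ∃ c, ∀ t : Finset ℕ, ↑t ⊆ T → #t = k → χ t = c := by
  induction k with
  | zero =>
    exact fun χ S hS => ⟨S, subset_rfl, hS, χ ∅, fun t _ ht => by rw [card_eq_zero.1 ht]⟩
  | succ k ih =>
    intro χ S hS
    have step (A : {A : Set ℕ // A.Infinite}) : ∃ B : {B : Set ℕ // B.Infinite},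
        B.1 ⊆ A.1 \ {sInf A.1} ∧
          ∃ c, ∀ t : Finset ℕ, ↑t ⊆ B.1 → #t = k → χ (insert (sInf A.1) t) = c := by
      obtain ⟨B, hBA, hB, c, hc⟩ :=
        ih (fun t => χ (insert (sInf A.1) t)) _ (A.2.sdiff (Set.finite_singleton _))
      exact ⟨⟨B, hB⟩, hBA, c, hc⟩
    -- iterating `next` yields `a 0 < a 1 < ⋯` in which the colour of a `(k+1)`-set depends
    -- only on its least element; pigeonhole on that colour finishes
    choose next next_sub col hcol using step
    let F : ℕ → {A : Set ℕ // A.Infinite} := fun n => next^[n] ⟨S, hS⟩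
    let a : ℕ → ℕ := fun n => sInf (F n).1
    have F_succ (n : ℕ) : F (n + 1) = next (F n) := Function.iterate_succ_apply' ..
    have F_anti : Antitone fun n => (F n).1 := antitone_nat_of_succ_le fun n => by
      rw [F_succ]; exact (next_sub _).trans Set.sdiff_subset
    have a_mem (n : ℕ) : a n ∈ (F n).1 := Nat.sInf_mem (F n).2.nonempty
    have a_lt {m x : ℕ} (hx : x ∈ (F (m + 1)).1) : a m < x := by
      rw [F_succ] at hx
      obtain ⟨hxm, hne⟩ := next_sub _ hx
      exact (Nat.sInf_le hxm).lt_of_ne (Ne.symm hne)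
    have a_strictMono : StrictMono a := strictMono_nat_of_lt_succ fun n => a_lt (a_mem (n + 1))
    obtain ⟨c, hc⟩ := Finite.exists_infinite_fiber fun n => col (F n)
    refine ⟨a '' ((fun n => col (F n)) ⁻¹' {c}), ?_, ?_, c, ?_⟩
    · rintro _ ⟨n, -, rfl⟩
      exact F_anti (Nat.zero_le n) (a_mem n)
    · exact (Set.infinite_coe_iff.mp hc).image a_strictMono.injective.injOn
    · intro t ht hcard
      have hne : t.Nonempty := card_pos.mp (by omega)
      obtain ⟨m, hm, hmin⟩ := ht (t.min'_mem hne)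
      have ham : a m ∈ t := hmin ▸ t.min'_mem hne
      have hrest : ↑(t.erase (a m)) ⊆ (next (F m)).1 := by
        intro y hy
        obtain ⟨hym, hyt⟩ := mem_erase.mp hy
        obtain ⟨n, -, rfl⟩ := ht hyt
        have hmn : m < n := a_strictMono.lt_iff_lt.mp <|
          hmin ▸ (t.min'_le _ hyt).lt_of_ne (hmin ▸ Ne.symm hym)
        exact F_succ m ▸ F_anti hmn (a_mem n)
      rw [← insert_erase ham, ← hm]
      exact hcol _ _ hrest (by rw [card_erase_of_mem ham]; omega)

theorem exists_forall_exists_monochromatic_subset {ι : Type*} [Finite ι] (k m : ℕ) :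
    ∃ N, ∀ χ : Finset (Fin N) → ι,
      ∃ W : Finset (Fin N), #W = m ∧ ∃ c, ∀ t ⊆ W, #t = k → χ t = c := by
  by_contra! hbad
  choose χ hχ using hbad
  -- compactness: the bad colourings of the `Fin n`, read on `ℕ`, converge along an ultrafilter
  let ψ (n : ℕ) (t : Finset ℕ) : ι :=
    χ n (t.preimage Fin.valEmbedding Fin.valEmbedding.injective.injOn)
  let U := Filter.hyperfilter ℕ
  have hlim (t : Finset ℕ) : ∃ c, ∀ᶠ n in U, ψ n t = c :=
    Ultrafilter.eventually_exists_iff.mp (.of_forall fun n => ⟨_, rfl⟩)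
  choose lim hlim using hlim
  obtain ⟨T, -, hT, c, hc⟩ := exists_infinite_monochromatic_subset k lim _ Set.infinite_univ
  obtain ⟨W, hWT, hWcard⟩ := hT.exists_subset_card_eq m
  obtain ⟨n, hn_agree, hn_large⟩ : ∃ n, (∀ t ∈ W.powersetCard k, ψ n t = lim t) ∧
      ∀ x ∈ W, x < n := by
    refine ((Filter.eventually_all_finset _).mpr fun t _ => hlim t).and ?_ |>.exists
    exact Nat.hyperfilter_le_atTop <| (Filter.eventually_all_finset W).mpr
      fun x _ => Filter.eventually_gt_atTop x
  obtain ⟨t, ht, hcard, hne⟩ := hχ n (W.attachFin hn_large) (by rw [card_attachFin, hWcard]) c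
  refine hne ?_
  have hsubW : t.map Fin.valEmbedding ⊆ W := by
    intro x hx
    obtain ⟨y, hy, rfl⟩ := mem_map.mp hx
    exact (mem_attachFin _).mp (ht hy)
  have hmemW : t.map Fin.valEmbedding ∈ W.powersetCard k :=
    mem_powersetCard.mpr ⟨hsubW, by rw [card_map, hcard]⟩
  calc χ n t = ψ n (t.map Fin.valEmbedding) := by simp only [ψ, preimage_map]
    _ = lim (t.map Fin.valEmbedding) := hn_agree _ hmemW
    _ = c := hc _ ((coe_subset.mpr hsubW).trans hWT) (by rw [card_map, hcard])

theorem exists_ramseyProp {q : ℕ} (Gs : Fin q → ThreeGraph) : ∃ N, RamseyProp Gs N := by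
  obtain ⟨N, hN⟩ := exists_forall_exists_monochromatic_subset (ι := Fin q) 3
    (univ.sup fun i => #(Gs i).verts + 1)
  refine ⟨N, fun χ => ?_⟩
  obtain ⟨W, hW, c, hc⟩ := hN χ
  have hle : #(Gs c).verts + 1 ≤ #W :=
    hW ▸ le_sup (f := fun i => #(Gs i).verts + 1) (mem_univ c)
  obtain ⟨x, -⟩ : W.Nonempty := card_pos.mp (by omega)
  have : Nonempty (Fin N) := ⟨x⟩
  obtain ⟨f, hfW, hf⟩ := (Gs c).verts.finite_toSet.exists_injOn_of_encard_le
    (t := (W : Set (Fin N))) (by simp only [Set.encard_coe_eq_coe_finsetCard]; norm_cast; omega)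
  refine ⟨c, f, hf, fun e he => hc _ ?_ ?_⟩
  · intro x hx
    obtain ⟨v, hv, rfl⟩ := mem_image.mp hx
    exact hfW ((Gs c).edge_sub e he hv)
  · rw [card_image_of_injOn (hf.mono (coe_subset.mpr ((Gs c).edge_sub e he))),
      (Gs c).edge_card e he]

theorem RamseyProp.mono {q : ℕ} {Gs : Fin q → ThreeGraph} {M N : ℕ} (hMN : M ≤ N)
    (hM : RamseyProp Gs M) : RamseyProp Gs N := by
  intro χ
  obtain ⟨i, f, hf, hfχ⟩ := hM fun t => χ (t.image (Fin.castLE hMN))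
  refine ⟨i, Fin.castLE hMN ∘ f, (Fin.castLE_injective hMN).comp_injOn hf, fun e he => ?_⟩
  rw [← image_image]
  exact hfχ e he

theorem lt_ramseyNumber_of_not_ramseyProp {q : ℕ} {Gs : Fin q → ThreeGraph} {N : ℕ}
    (hN : ¬ RamseyProp Gs N) : N < ramseyNumber Gs := by
  by_contra! hle
  have hmin : RamseyProp Gs (ramseyNumber Gs) := Nat.sInf_mem (exists_ramseyProp Gs)
  exact hN (hmin.mono hle)

theorem exists_perm_smul_finset_eq {α : Type*} [DecidableEq α] {s t : Finset α} (h : #s = #t) :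
    ∃ π : Equiv.Perm α, π • s = t := by
  have := Set.powersetCard.isPretransitive (α := α) (n := #s)
  obtain ⟨π, hπ⟩ := MulAction.exists_smul_eq (Equiv.Perm α)
    (⟨s, rfl⟩ : Set.powersetCard α #s) ⟨t, h.symm⟩
  exact ⟨π, congrArg Subtype.val hπ⟩

section PermCover

variable {α : Type*} [Fintype α] [DecidableEq α]

theorem card_perm_smul_finset_eq_congr {s t t' : Finset α} (h : #t = #t') :
    #{σ : Equiv.Perm α | σ • s = t} = #{σ : Equiv.Perm α | σ • s = t'} := by
  obtain ⟨π, hπ⟩ := exists_perm_smul_finset_eq h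
  refine card_nbij' (π * ·) (π⁻¹ * ·) ?_ ?_ (fun σ _ => by simp) (fun σ _ => by simp)
  · intro σ hσ
    simp only [mem_coe, mem_filter, mem_univ, true_and] at hσ ⊢
    rw [mul_smul, hσ, hπ]
  · intro σ hσ
    simp only [mem_coe, mem_filter, mem_univ, true_and] at hσ ⊢
    rw [mul_smul, hσ, ← hπ, inv_smul_smul]

theorem card_perm_smul_finset_eq_mul_choose {s t : Finset α} (h : #s = #t) :
    #{σ : Equiv.Perm α | σ • s = t} * (Fintype.card α).choose #s =
      Fintype.card (Equiv.Perm α) := by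
  have hfib := card_eq_sum_card_fiberwise (s := univ) (t := powersetCard #s univ)
    (f := fun σ : Equiv.Perm α => σ • s)
    (fun σ _ => mem_powersetCard.mpr ⟨subset_univ _, card_smul_finset σ s⟩)
  rw [card_univ] at hfib
  rw [hfib, sum_congr rfl fun t' ht' =>
      card_perm_smul_finset_eq_congr ((mem_powersetCard.mp ht').2.trans h),
    sum_const, card_powersetCard, card_univ, smul_eq_mul, mul_comm]

theorem card_perm_smul_finset_mem_mul_choose {k : ℕ} {E : Finset (Finset α)}
    (hE : E ⊆ powersetCard k univ) {s : Finset α} (hs : #s = k) :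
    #{σ : Equiv.Perm α | σ • s ∈ E} * (Fintype.card α).choose k =
      #E * Fintype.card (Equiv.Perm α) := by
  have hfib := card_eq_sum_card_fiberwise (s := {σ : Equiv.Perm α | σ • s ∈ E}) (t := E)
    (f := fun σ => σ • s) (fun σ hσ => (mem_filter.mp hσ).2)
  rw [hfib, sum_mul, ← smul_eq_mul, ← sum_const]
  refine sum_congr rfl fun t ht => ?_
  rw [filter_filter, filter_congr fun σ _ => and_iff_right_of_imp (· ▸ ht), ← hs,
    card_perm_smul_finset_eq_mul_choose (hs.trans (mem_powersetCard.mp (hE ht)).2.symm)]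

theorem card_perm_smul_finset_notMem_mul_choose {k : ℕ} {E : Finset (Finset α)}
    (hE : E ⊆ powersetCard k univ) {s : Finset α} (hs : #s = k) :
    #{σ : Equiv.Perm α | σ • s ∉ E} * (Fintype.card α).choose k =
      ((Fintype.card α).choose k - #E) * Fintype.card (Equiv.Perm α) := by
  have hsplit :=
    card_filter_add_card_filter_not (s := univ) (p := fun σ : Equiv.Perm α => σ • s ∈ E)
  rw [card_univ] at hsplit
  rw [Nat.sub_mul, ← card_perm_smul_finset_mem_mul_choose hE hs, ← hsplit,
    mul_comm ((Fintype.card α).choose k), add_mul, Nat.add_sub_cancel_left]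

theorem card_pi_perm_smul_notMem_mul_choose_pow {k q : ℕ} {E : Finset (Finset α)}
    (hE : E ⊆ powersetCard k univ) {s : Finset α} (hs : #s = k) :
    #{σ : Fin q → Equiv.Perm α | ∀ i, σ i • s ∉ E} * (Fintype.card α).choose k ^ q =
      ((Fintype.card α).choose k - #E) ^ q * Fintype.card (Equiv.Perm α) ^ q := by
  have : ({σ : Fin q → Equiv.Perm α | ∀ i, σ i • s ∉ E} : Finset _) =
      Fintype.piFinset fun _ => {τ : Equiv.Perm α | τ • s ∉ E} := by
    ext σ; simp
  rw [this, Fintype.card_piFinset_const, ← mul_pow,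
    card_perm_smul_finset_notMem_mul_choose hE hs, mul_pow]

theorem exists_perm_cover {k q : ℕ} {E : Finset (Finset α)} (hE : E ⊆ powersetCard k univ)
    (h : (Fintype.card α).choose k * ((Fintype.card α).choose k - #E) ^ q <
      (Fintype.card α).choose k ^ q) :
    ∃ σ : Fin q → Equiv.Perm α, ∀ s : Finset α, #s = k → ∃ i, σ i • s ∈ E := by
  set T := (Fintype.card α).choose k
  let missed (σ : Fin q → Equiv.Perm α) : Finset (Finset α) :=
    {s ∈ powersetCard k univ | ∀ i, σ i • s ∉ E}
  have hsum : ∑ σ, #(missed σ) * T ^ q = ∑ _σ : Fin q → Equiv.Perm α, T * (T - #E) ^ q :=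
    calc ∑ σ, #(missed σ) * T ^ q
        = ∑ s ∈ powersetCard k univ,
            #{σ : Fin q → Equiv.Perm α | ∀ i, σ i • s ∉ E} * T ^ q := by
          rw [← sum_mul, ← sum_mul]
          simp_rw [missed, card_filter]
          exact congrArg (· * T ^ q) sum_comm
      _ = ∑ _s ∈ powersetCard k univ, (T - #E) ^ q * Fintype.card (Equiv.Perm α) ^ q :=
          sum_congr rfl fun s hs =>
            card_pi_perm_smul_notMem_mul_choose_pow hE (mem_powersetCard.mp hs).2
      _ = ∑ _σ : Fin q → Equiv.Perm α, T * (T - #E) ^ q := by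
          simp only [sum_const, card_powersetCard, card_univ, Fintype.card_fun, Fintype.card_fin,
            smul_eq_mul, T]
          ring
  obtain ⟨σ, -, hσ⟩ := exists_le_of_sum_le univ_nonempty hsum.le
  have hempty : missed σ = ∅ := by
    by_contra hne
    have hpos : 0 < #(missed σ) := card_pos.mpr (nonempty_iff_ne_empty.mpr hne)
    have := Nat.le_mul_of_pos_left (T ^ q) hpos
    omega
  refine ⟨σ, fun s hs => ?_⟩
  by_contra! hmiss
  have : s ∈ missed σ := mem_filter.mpr ⟨mem_powersetCard.mpr ⟨subset_univ s, hs⟩, hmiss⟩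
  simp [hempty] at this

end PermCover

theorem ContainsCopy.card_edges_le {H G : ThreeGraph} (h : ContainsCopy H G) :
    #G.edges ≤ #H.edges := by
  obtain ⟨f, hf, -, hfe⟩ := h
  refine card_le_card_of_injOn (fun e => e.image f) (fun e he => hfe e he)
    fun e₁ he₁ e₂ he₂ heq => ?_
  have hsub (e) (he : e ∈ G.edges) : (e : Set ℕ) ⊆ G.verts := coe_subset.mpr (G.edge_sub e he)
  rw [← coe_inj, ← hf.image_eq_image_iff (hsub e₁ he₁) (hsub e₂ he₂), ← coe_image,
    ← coe_image]
  exact congrArg _ heq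

theorem ThreeGraph.card_edges_le_choose {N : ℕ} (H : ThreeGraph) (hH : H.verts = range N) :
    #H.edges ≤ N.choose 3 := by
  calc #H.edges ≤ #(powersetCard 3 (range N)) :=
        card_le_card fun e he => mem_powersetCard.mpr ⟨hH ▸ H.edge_sub e he, H.edge_card e he⟩
    _ = N.choose 3 := by rw [card_powersetCard, card_range]

theorem bddAbove_card_edges_free (N : ℕ) (G : ThreeGraph) :
    BddAbove {m | ∃ H : ThreeGraph,
      H.verts = range N ∧ ¬ ContainsCopy H G ∧ #H.edges = m} := by
  refine ⟨N.choose 3, ?_⟩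
  rintro m ⟨H, hH, -, rfl⟩
  exact H.card_edges_le_choose hH

theorem exists_free_card_edges_eq_exNum {G : ThreeGraph} (hG : G.edges.Nonempty) (N : ℕ) :
    ∃ H : ThreeGraph, H.verts = range N ∧ ¬ ContainsCopy H G ∧ #H.edges = exNum N G := by
  let empty : ThreeGraph := ⟨range N, ∅, by simp, by simp⟩
  have hempty : ¬ ContainsCopy empty G := fun h => by
    simpa [empty] using hG.card_pos.trans_le h.card_edges_le
  refine Nat.sSup_mem ?_ (bddAbove_card_edges_free N G)
  exact ⟨0, empty, rfl, hempty, rfl⟩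

theorem one_le_exNum {G : ThreeGraph} (hG : 2 ≤ #G.edges) {N : ℕ} (hN : 3 ≤ N) :
    1 ≤ exNum N G := by
  let single : ThreeGraph := ⟨range N, {{0, 1, 2}}, by simp, by simp [insert_subset_iff]; omega⟩
  refine le_csSup (bddAbove_card_edges_free N G) ⟨single, rfl, fun h => ?_, rfl⟩
  have := h.card_edges_le
  simp [single] at this
  omega

theorem exists_free_triples_card_eq_exNum {G : ThreeGraph} (hG : G.edges.Nonempty) (N : ℕ) :
    ∃ E : Finset (Finset (Fin N)), E ⊆ powersetCard 3 univ ∧ #E = exNum N G ∧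
      ∀ f : ℕ → Fin N, Set.InjOn f G.verts → ¬ ∀ e ∈ G.edges, e.image f ∈ E := by
  obtain ⟨H, hH, hfree, hcard⟩ := exists_free_card_edges_eq_exNum hG N
  refine ⟨{t ∈ powersetCard 3 (univ : Finset (Fin N)) | t.map Fin.valEmbedding ∈ H.edges},
    filter_subset _ _, ?_, ?_⟩
  · rw [← hcard]
    refine card_nbij (·.map Fin.valEmbedding) (fun t ht => (mem_filter.mp ht).2)
      (fun t₁ _ t₂ _ h => map_injective _ h) fun e he => ?_
    have he_sub : e ⊆ univ.map Fin.valEmbedding := fun x hx =>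
      mem_map.mpr ⟨⟨x, mem_range.mp (hH ▸ H.edge_sub e he hx)⟩, mem_univ _, rfl⟩
    obtain ⟨t, -, rfl⟩ := subset_map_iff.mp he_sub
    refine ⟨t, mem_filter.mpr ⟨mem_powersetCard.mpr ⟨subset_univ t, ?_⟩, he⟩, rfl⟩
    rw [← card_map Fin.valEmbedding, H.edge_card _ he]
  · intro f hf hfE
    refine hfree ⟨Fin.val ∘ f, Fin.val_injective.comp_injOn hf, fun v _ => ?_, fun e he => ?_⟩
    · rw [hH]; exact mem_range.mpr (f v).2
    · simpa [map_eq_image, image_image] using (mem_filter.mp (hfE e he)).2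

theorem exists_coloring_of_perm_cover {G : ThreeGraph} {N q : ℕ} (hq : 0 < q)
    {E : Finset (Finset (Fin N))}
    (hfree : ∀ f : ℕ → Fin N, Set.InjOn f G.verts → ¬ ∀ e ∈ G.edges, e.image f ∈ E)
    (σ : Fin q → Equiv.Perm (Fin N))
    (hσ : ∀ t : Finset (Fin N), #t = 3 → ∃ i, σ i • t ∈ E) :
    ∃ χ : Finset (Fin N) → Fin q, ∀ i, ¬ MonoCopy χ i G := by
  let χ (t : Finset (Fin N)) : Fin q :=
    if h : ∃ i, σ i • t ∈ E then h.choose else ⟨0, hq⟩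
  refine ⟨χ, fun i ⟨f, hf, hfχ⟩ =>
    hfree (σ i ∘ f) ((σ i).injective.comp_injOn hf) fun e he => ?_⟩
  have hcard : #(e.image f) = 3 := by
    rw [card_image_of_injOn (hf.mono (coe_subset.mpr (G.edge_sub e he))), G.edge_card e he]
  have hcov := hσ _ hcard
  have hi : hcov.choose = i := by simpa [χ, hcov] using hfχ e he
  rw [← image_image, ← hi]
  exact hcov.choose_spec

theorem mul_sub_pow_lt_pow {T x q : ℕ} (hT : 0 < T) (hxT : x ≤ T)
    (h : T * Real.log T < q * x) : T * (T - x) ^ q < T ^ q := by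
  have hTpos : (0 : ℝ) < T := by exact_mod_cast hT
  have hstep : ((T : ℝ) - x) ^ q ≤ T ^ q * Real.exp (-(q * x / T)) := by
    have h1 : (T : ℝ) - x ≤ T * Real.exp (-(x / T)) := calc
      (T : ℝ) - x = T * (-(x / T) + 1) := by field_simp; ring
      _ ≤ T * Real.exp (-(x / T)) := by gcongr; exact Real.add_one_le_exp _
    calc ((T : ℝ) - x) ^ q ≤ (T * Real.exp (-(x / T))) ^ q :=
          pow_le_pow_left₀ (by simp [hxT]) h1 q
      _ = T ^ q * Real.exp (-(q * x / T)) := by rw [mul_pow, ← Real.exp_nat_mul]; ring_nf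
  have hexp : (T : ℝ) < Real.exp (q * x / T) := by
    rw [← Real.log_lt_iff_lt_exp hTpos, lt_div_iff₀ hTpos, mul_comm]; exact h
  have : (T : ℝ) * (T - x) ^ q < T ^ q := calc
    (T : ℝ) * (T - x) ^ q ≤ T * (T ^ q * Real.exp (-(q * x / T))) := by gcongr
    _ = T ^ q * (T / Real.exp (q * x / T)) := by rw [Real.exp_neg]; ring
    _ < T ^ q * 1 := by gcongr; exact (div_lt_one (Real.exp_pos _)).mpr hexp
    _ = T ^ q := mul_one _
  exact_mod_cast (show ((T * (T - x) ^ q : ℕ) : ℝ) < (T ^ q : ℕ) by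
    push_cast [hxT]; exact this)

theorem choose_three_mul_log_lt {N q x : ℕ} (hN : 3 ≤ N) (hx : 0 < x)
    (hq : 4 * ((N : ℝ) ^ 3 / x) * Real.log N ≤ q) :
    (N.choose 3 : ℝ) * Real.log (N.choose 3) < q * x := by
  have hT : (0 : ℝ) < N.choose 3 := by exact_mod_cast Nat.choose_pos hN
  have hTN : (N.choose 3 : ℝ) ≤ N ^ 3 := by exact_mod_cast Nat.choose_le_pow N 3
  have hlogN : 0 < Real.log N := Real.log_pos (by exact_mod_cast (by omega : 1 < N))
  have hlogT : Real.log (N.choose 3) ≤ 3 * Real.log N := calc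
    Real.log (N.choose 3) ≤ Real.log (N ^ 3) := Real.log_le_log hT hTN
    _ = 3 * Real.log N := by rw [Real.log_pow]; norm_num
  have hqx : 4 * (N ^ 3 * Real.log N) ≤ q * x := by
    have := mul_le_mul_of_nonneg_right hq (Nat.cast_nonneg x)
    rwa [show 4 * ((N : ℝ) ^ 3 / x) * Real.log N * x = 4 * (N ^ 3 * Real.log N) by
      field_simp] at this
  have hN3 : (0 : ℝ) < N ^ 3 * Real.log N := by positivity
  calc (N.choose 3 : ℝ) * Real.log (N.choose 3) ≤ N ^ 3 * (3 * Real.log N) :=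
        mul_le_mul hTN hlogT (Real.log_nonneg (by exact_mod_cast hT)) (by positivity)
    _ < 4 * (N ^ 3 * Real.log N) := by linarith
    _ ≤ q * x := hqx

/-- Let `G` be a 3-uniform hypergraph with at least two edges. There is a
constant `C = C(G)` such that for all `N ≥ 3` and all
`q ≥ C · (N³ / ex(N, G)) · log N`, there is a `q`-coloring of the triples of `Fin N` with
no monochromatic copy of `G`; in particular `r(G; q) > N` for such `q`. -/
theorem stmt19 (G : ThreeGraph) (hG : 2 ≤ G.edges.card) :
    ∃ C : ℝ, 0 < C ∧ ∀ N q : ℕ, 3 ≤ N →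
      C * ((N : ℝ) ^ 3 / (exNum N G : ℝ)) * Real.log N ≤ (q : ℝ) →
      (∃ χ : Finset (Fin N) → Fin q, ∀ i : Fin q, ¬ MonoCopy χ i G) ∧
      N < rq G q := by
  refine ⟨4, by norm_num, fun N q hN hq => ?_⟩
  have hGne : G.edges.Nonempty := card_pos.mp (by omega)
  obtain ⟨E, hE, hEcard, hfree⟩ := exists_free_triples_card_eq_exNum hGne N
  have hxT : exNum N G ≤ N.choose 3 := by simpa [← hEcard] using card_le_card hE
  have hcover := mul_sub_pow_lt_pow (Nat.choose_pos hN) hxT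
    (choose_three_mul_log_lt hN (one_le_exNum hG hN) hq)
  have hq0 : 0 < q := Nat.pos_of_ne_zero fun hq0 => by
    rw [hq0, pow_zero, pow_zero, mul_one, Nat.lt_one_iff] at hcover
    exact (Nat.choose_pos hN).ne' hcover
  obtain ⟨σ, hσ⟩ := exists_perm_cover (q := q) hE (by rwa [Fintype.card_fin, hEcard])
  obtain ⟨χ, hχ⟩ := exists_coloring_of_perm_cover hq0 hfree σ hσ
  exact ⟨⟨χ, hχ⟩, lt_ramseyNumber_of_not_ramseyProp fun h => (h χ).elim hχ⟩
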